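/- Let v : [0,∞) → ℝ be a nonnegative differentiable function and C > 0 such that v'(t) ≤ C e^{-t} √(v(t)) - v(t) for all t ≥ 0. Then there exists a constant C' (depending only on C and v(0)) with v(t) ≤ C' e^{-t/2} for all t ≥ 0. -/

import Mathlib

/-! The barrier `K e^{-t/2}` with `K > max (v 0) (4 C²)` is a strict supersolution: where `v` touches
it, `v' ≤ |C| √K e^{-t/2} - K e^{-t/2} < -(K/2) e^{-t/2}`, because `2 |C| < √K`. A function starting
below a strict supersolution stays below it. -/

open Real

lemma sqrt_mul_exp_neg_half {K : ℝ} (hK : 0 ≤ K) (x : ℝ) :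
    √(K * exp (-x / 2)) = √K * exp (-x / 4) := by
  rw [show exp (-x / 2) = exp (-x / 4) ^ 2 by rw [← exp_nat_mul]; ring_nf, sqrt_mul hK,
    sqrt_sq (exp_pos _).le]

lemma abs_mul_sqrt_lt_half {C K : ℝ} (hK : 4 * C ^ 2 < K) : |C| * √K < K / 2 := by
  have hK0 : 0 < K := by nlinarith
  have h2C : 2 * |C| < √K := (lt_sqrt (by positivity)).2 (by rw [mul_pow, sq_abs]; linarith)
  have := mul_lt_mul_of_pos_right h2C (sqrt_pos.2 hK0)
  rw [mul_self_sqrt hK0.le] at this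
  linarith

lemma mul_exp_neg_mul_sqrt_sub_lt {C K x : ℝ} (hK : 4 * C ^ 2 < K) (hx : 0 ≤ x) :
    C * exp (-x) * √(K * exp (-x / 2)) - K * exp (-x / 2) < -(K / 2) * exp (-x / 2) := by
  have hK0 : 0 ≤ K := by nlinarith
  have hexp : exp (-x) * exp (-x / 4) ≤ exp (-x / 2) := by
    rw [← exp_add]; exact exp_le_exp.2 (by linarith)
  have hforcing : C * exp (-x) * √(K * exp (-x / 2)) ≤ |C| * √K * exp (-x / 2) :=
    calc C * exp (-x) * √(K * exp (-x / 2))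
        ≤ |C| * √K * (exp (-x) * exp (-x / 4)) := by
          rw [sqrt_mul_exp_neg_half hK0, show C * exp (-x) * (√K * exp (-x / 4))
            = C * (√K * (exp (-x) * exp (-x / 4))) by ring, ← mul_assoc]
          gcongr
          exact le_abs_self C
      _ ≤ |C| * √K * exp (-x / 2) := by gcongr
  nlinarith [abs_mul_sqrt_lt_half hK, exp_pos (-x / 2)]

theorem le_mul_exp_neg_half_of_deriv_le {v : ℝ → ℝ} {C K : ℝ}
    (hdiff : ∀ t, 0 ≤ t → DifferentiableAt ℝ v t)
    (hineq : ∀ t, 0 ≤ t → deriv v t ≤ C * exp (-t) * √(v t) - v t)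
    (hv0 : v 0 ≤ K) (hK : 4 * C ^ 2 < K) {t : ℝ} (ht : 0 ≤ t) :
    v t ≤ K * exp (-t / 2) := by
  refine image_le_of_deriv_right_lt_deriv_boundary (f' := deriv v) (B := fun x ↦ K * exp (-x / 2))
    (B' := fun x ↦ -(K / 2) * exp (-x / 2))
    (fun x hx ↦ (hdiff x hx.1).continuousAt.continuousWithinAt)
    (fun x hx ↦ (hdiff x hx.1).hasDerivAt.hasDerivWithinAt) (by simpa using hv0)
    (fun x ↦ ?_) (fun x hx htouch ↦ ?_) ⟨ht, le_rfl⟩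
  · exact (((hasDerivAt_neg x).div_const 2).exp.const_mul K).congr_deriv (by ring)
  · exact (hineq x hx.1).trans_lt (htouch ▸ mul_exp_neg_mul_sqrt_sub_lt hK hx.1)

theorem stmt2_general (v : ℝ → ℝ) (C : ℝ)
    (hdiff : ∀ t, 0 ≤ t → DifferentiableAt ℝ v t)
    (hineq : ∀ t, 0 ≤ t →
      deriv v t ≤ C * Real.exp (-t) * Real.sqrt (v t) - v t) :
    ∃ C' : ℝ, ∀ t, 0 ≤ t → v t ≤ C' * Real.exp (-t / 2) :=
  ⟨max (v 0) (4 * C ^ 2) + 1, fun _ ht ↦ le_mul_exp_neg_half_of_deriv_le hdiff hineq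
    (by linarith [le_max_left (v 0) (4 * C ^ 2)])
    (by linarith [le_max_right (v 0) (4 * C ^ 2)]) ht⟩

theorem stmt2 (v : ℝ → ℝ) (C : ℝ) (hC : 0 < C)
    (hdiff : ∀ t, 0 ≤ t → DifferentiableAt ℝ v t)
    (hpos : ∀ t, 0 ≤ t → 0 ≤ v t)
    (hineq : ∀ t, 0 ≤ t →
      deriv v t ≤ C * Real.exp (-t) * Real.sqrt (v t) - v t) :
    ∃ C' : ℝ, ∀ t, 0 ≤ t → v t ≤ C' * Real.exp (-t / 2) :=
  stmt2_general v C hdiff hineq
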